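/- Let f : R^n → C be continuous with f(0) ≠ 0, let Λ = {(x_1,ω_1),...,(x_N,ω_N)} ⊂ R^{2n} with the x_i pairwise distinct, and suppose R > 0 is such that |f(t)| < |f(0)|/(N-1) for all t with ‖t‖ > R. If ‖x_i - x_j‖ > R for all i ≠ j, then the time-frequency translates π(x_i,ω_i)f(t) = exp(2πi ω_i·t) f(t - x_i) are linearly independent. -/

import Mathlib

/-!
Evaluate the translates at the time points `x j`: the matrix `(π(x i, ω i) f (x j))_{j,i}` has
diagonal entries of modulus `|f 0|` and off-diagonal entries `|f (x j - x i)| < |f 0| / (N - 1)`,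
so it is strictly diagonally dominant and hence invertible (Levy–Desplanques). A vanishing
linear combination of the translates has its coefficient vector in the kernel of that matrix.
-/

open Finset Matrix

theorem Fintype.linearIndependent_of_det_eval_ne_zero {ι X R : Type*} [Fintype ι]
    [DecidableEq ι] [CommRing R] [NoZeroDivisors R] (φ : ι → X → R) (p : ι → X)
    (h : (Matrix.of fun j i => φ i (p j)).det ≠ 0) : LinearIndependent R φ := by
  rw [Fintype.linearIndependent_iff]
  intro g hg
  have hker : (Matrix.of fun j i => φ i (p j)) *ᵥ g = 0 := by
    ext j
    simpa [mulVec, dotProduct, mul_comm] using congrFun hg (p j)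
  exact congrFun (eq_zero_of_mulVec_eq_zero h hker)

theorem Fintype.linearIndependent_of_sum_norm_eval_lt {ι X K : Type*} [Fintype ι]
    [DecidableEq ι] [NormedField K] (φ : ι → X → K) (p : ι → X)
    (h : ∀ j, ∑ i ∈ univ.erase j, ‖φ i (p j)‖ < ‖φ j (p j)‖) : LinearIndependent K φ :=
  linearIndependent_of_det_eval_ne_zero φ p (det_ne_zero_of_sum_row_lt_diag h)

theorem Finset.sum_lt_of_forall_lt_div_card {ι : Type*} {s : Finset ι} (hs : s.Nonempty)
    {a : ι → ℝ} {c : ℝ} (h : ∀ i ∈ s, a i < c / #s) : ∑ i ∈ s, a i < c := by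
  calc ∑ i ∈ s, a i < ∑ _i ∈ s, c / #s := sum_lt_sum_of_nonempty hs h
    _ = c := by
      rw [sum_const, nsmul_eq_mul]
      field_simp [hs.card_pos.ne']

/-- `π(x, ω) f = M_ω T_x f`. -/
noncomputable def timeFreqShift {E : Type*} [NormedAddCommGroup E] [InnerProductSpace ℝ E]
    (x ω : E) (f : E → ℂ) : E → ℂ :=
  fun t => Complex.exp (2 * Real.pi * Complex.I * ((inner ℝ ω t : ℝ) : ℂ)) * f (t - x)

theorem norm_timeFreqShift_apply {E : Type*} [NormedAddCommGroup E] [InnerProductSpace ℝ E]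
    (x ω : E) (f : E → ℂ) (t : E) : ‖timeFreqShift x ω f t‖ = ‖f (t - x)‖ := by
  rw [timeFreqShift, norm_mul, Complex.norm_exp]
  simp

theorem stmt_2_general {n N : ℕ} (hN : 2 ≤ N)
    (f : EuclideanSpace ℝ (Fin n) → ℂ)
    (x ω : Fin N → EuclideanSpace ℝ (Fin n))
    (R : ℝ)
    (hdecay : ∀ t : EuclideanSpace ℝ (Fin n), R < ‖t‖ →
      ‖f t‖ < ‖f 0‖ / ((N : ℝ) - 1))
    (hsep : ∀ i j, i ≠ j → R < ‖x i - x j‖) :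
    LinearIndependent ℂ
      (fun i : Fin N => (fun t =>
        Complex.exp (2 * Real.pi * Complex.I * ((inner ℝ (ω i) t : ℝ) : ℂ)) *
          f (t - x i) : EuclideanSpace ℝ (Fin n) → ℂ)) := by
  refine Fintype.linearIndependent_of_sum_norm_eval_lt
    (fun i => timeFreqShift (x i) (ω i) f) x fun j => ?_
  have hcard : (#(univ.erase j) : ℝ) = (N : ℝ) - 1 := by
    rw [card_erase_of_mem (mem_univ j), card_univ, Fintype.card_fin,
      Nat.cast_sub (by omega), Nat.cast_one]
  have hothers : (univ.erase j).Nonempty := by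
    rw [← card_pos, card_erase_of_mem (mem_univ j), card_univ, Fintype.card_fin]
    omega
  simp only [norm_timeFreqShift_apply, sub_self]
  refine sum_lt_of_forall_lt_div_card hothers fun i hi => ?_
  rw [hcard]
  exact hdecay _ (hsep j i (ne_of_mem_erase hi).symm)

/-- Theorem 1: time-frequency translates of `f ∈ C(ℝⁿ)` are linearly independent
when the time coordinates are separated by more than `R`, where `|f| < |f 0|/(N-1)`
outside the ball of radius `R`. -/
theorem stmt_2 {n N : ℕ} (hN : 2 ≤ N)
    (f : EuclideanSpace ℝ (Fin n) → ℂ) (hf : Continuous f) (hf0 : f 0 ≠ 0)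
    (x ω : Fin N → EuclideanSpace ℝ (Fin n)) (hx : Function.Injective x)
    (R : ℝ) (hR : 0 < R)
    (hdecay : ∀ t : EuclideanSpace ℝ (Fin n), R < ‖t‖ →
      ‖f t‖ < ‖f 0‖ / ((N : ℝ) - 1))
    (hsep : ∀ i j, i ≠ j → R < ‖x i - x j‖) :
    LinearIndependent ℂ
      (fun i : Fin N => (fun t =>
        Complex.exp (2 * Real.pi * Complex.I * ((inner ℝ (ω i) t : ℝ) : ℂ)) *
          f (t - x i) : EuclideanSpace ℝ (Fin n) → ℂ)) :=
  stmt_2_general hN f x ω R hdecay hsep
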